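/- arXiv:1502.03711 — 3 statements merged into one kernel-verified Lean document; each statement's English description precedes it below -/
import Mathlib

section
/- Let A be a commutative ring, K its total quotient ring, and B an A-subalgebra of K. Regard B ⊗_A B as a B-module through the first factor, and let f : B ⊗_A B → B be the B-linear multiplication map sending b ⊗ b' to b·b'. Then precomposition with f, φ ↦ φ ∘ f, is a bijection from the B-linear endomorphisms Hom_B(B, B) onto the B-linear maps Hom_B(B ⊗_A B, B). -/
open TensorProduct

set_option synthInstance.maxHeartbeats 1000000
set_option maxHeartbeats 2000000

lemma psi_tmul_key (A : Type*) [CommRing A]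
    (B : Subalgebra A (Localization (nonZeroDivisors A)))
    (ψ : (B ⊗[A] B) →ₗ[B] B) (b b' : B) :
    ψ (b ⊗ₜ[A] b') = b * b' * ψ ((1 : B) ⊗ₜ[A] (1 : B)) := by
  set K := Localization (nonZeroDivisors A)
  obtain ⟨⟨a, s⟩, h⟩ := IsLocalization.surj (nonZeroDivisors A) (b' : K)
  have hB : (s : A) • b' = algebraMap A B a := by
    apply Subtype.ext
    have h1 : (((s : A) • b' : B) : K) = (s : A) • (b' : K) := rfl
    rw [h1, Algebra.smul_def, mul_comm]
    rw [h]
    rfl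
  have hcancel : algebraMap A B s * ψ (b ⊗ₜ[A] b')
      = algebraMap A B s * (b * b' * ψ ((1 : B) ⊗ₜ[A] (1 : B))) := by
    have e1 : algebraMap A B s * ψ (b ⊗ₜ[A] b')
        = ψ ((algebraMap A B s * b) ⊗ₜ[A] b') := by
      have h0 := map_smul ψ (algebraMap A B (s : A)) (b ⊗ₜ[A] b')
      rw [smul_tmul', smul_eq_mul, smul_eq_mul] at h0
      exact h0.symm
    have e2 : (algebraMap A B s * b) ⊗ₜ[A] b' = b ⊗ₜ[A] ((s : A) • b') := by
      rw [← Algebra.smul_def, smul_tmul]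
    have e3 : b ⊗ₜ[A] ((s : A) • b') = ((a : A) • b) ⊗ₜ[A] (1 : B) := by
      rw [hB, ← mul_one (algebraMap A B a), ← Algebra.smul_def, ← smul_tmul]
    have e4 : ψ (((a : A) • b) ⊗ₜ[A] (1 : B)) = (algebraMap A B a * b) * ψ ((1:B) ⊗ₜ[A] (1:B)) := by
      have h0 := map_smul ψ (algebraMap A B a * b) ((1:B) ⊗ₜ[A] (1:B))
      rw [smul_tmul', smul_eq_mul, smul_eq_mul, mul_one] at h0
      rw [Algebra.smul_def]
      exact h0
    rw [e1, e2, e3, e4, ← hB, Algebra.smul_def]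
    ring
  have hu : IsUnit (algebraMap A K (s : A)) :=
    IsLocalization.map_units K s
  have : ((algebraMap A B s * ψ (b ⊗ₜ[A] b') : B) : K)
      = ((algebraMap A B s * (b * b' * ψ ((1 : B) ⊗ₜ[A] (1 : B))) : B) : K) :=
    congrArg Subtype.val hcancel
  push_cast at this
  apply Subtype.ext
  exact hu.mul_left_cancel this

/-- Let `A` be a commutative ring, `K` its total quotient ring and `B` an `A`-subalgebra
of `K`. Regarding `B ⊗[A] B` as a `B`-module through the first factor, and letting
`f : B ⊗[A] B → B` be the `B`-linear multiplication map `b ⊗ b' ↦ b * b'`,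
precomposition with `f` is a bijection `Hom_B(B, B) → Hom_B(B ⊗[A] B, B)`. -/
theorem precomp_mul_bijective (A : Type*) [CommRing A]
    (B : Subalgebra A (Localization (nonZeroDivisors A)))
    (f : (B ⊗[A] B) →ₗ[B] B)
    (hf : ∀ b b' : B, f (b ⊗ₜ[A] b') = b * b') :
    Function.Bijective (fun φ : B →ₗ[B] B => φ.comp f) := by
  constructor
  · intro φ₁ φ₂ h
    have h1 : φ₁ (f ((1:B) ⊗ₜ[A] (1:B))) = φ₂ (f ((1:B) ⊗ₜ[A] (1:B))) :=
      DFunLike.congr_fun h ((1:B) ⊗ₜ[A] (1:B))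
    rw [hf, mul_one] at h1
    exact LinearMap.ext_ring h1
  · intro ψ
    refine ⟨LinearMap.toSpanSingleton B B (ψ ((1:B) ⊗ₜ[A] (1:B))), ?_⟩
    apply LinearMap.ext
    intro x
    induction x using TensorProduct.induction_on with
    | zero => simp
    | tmul b b' =>
      simp only [LinearMap.coe_comp, Function.comp_apply, hf,
        LinearMap.toSpanSingleton_apply, smul_eq_mul]
      exact (psi_tmul_key A B ψ b b').symm
    | add x y hx hy =>
      simp only [LinearMap.coe_comp, Function.comp_apply, map_add] at *
      rw [hx, hy]
end

section
/- Let A be a commutative ring, K its total quotient ring, and B an A-subalgebra of K. Regard B ⊗_A B as a B-module through the first factor. Then every B-linear map ψ : B ⊗_A B → B satisfies ψ(1 ⊗ b) = b · ψ(1 ⊗ 1) for all b ∈ B. -/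
open TensorProduct

set_option synthInstance.maxHeartbeats 1000000
set_option maxHeartbeats 2000000

/-- Let `A` be a commutative ring, `K` its total quotient ring and `B` an `A`-subalgebra
of `K`. Regarding `B ⊗[A] B` as a `B`-module through the first factor, every `B`-linear
map `ψ : B ⊗[A] B → B` satisfies `ψ (1 ⊗ b) = b * ψ (1 ⊗ 1)` for all `b ∈ B`. -/
theorem psi_one_tmul (A : Type*) [CommRing A]
    (B : Subalgebra A (Localization (nonZeroDivisors A)))
    (ψ : (B ⊗[A] B) →ₗ[B] B) (b : B) :
    ψ ((1 : B) ⊗ₜ[A] b) = b * ψ ((1 : B) ⊗ₜ[A] (1 : B)) := by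
  set K := Localization (nonZeroDivisors A)
  obtain ⟨⟨a, s⟩, hs⟩ := IsLocalization.surj (nonZeroDivisors A) (b : K)
  -- `s • b = algebraMap A B a` in `B`
  have hsb : (s : A) • b = algebraMap A B a := by
    ext
    simp only [Subalgebra.coe_smul, SubalgebraClass.coe_algebraMap]
    rw [Algebra.smul_def, mul_comm, ← hs]
  have h1 : algebraMap A B s * ψ ((1 : B) ⊗ₜ[A] b)
      = algebraMap A B s * (b * ψ ((1 : B) ⊗ₜ[A] (1 : B))) := by
    have e1 : algebraMap A B s * ψ ((1 : B) ⊗ₜ[A] b)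
        = ψ ((1 : B) ⊗ₜ[A] ((s : A) • b)) := by
      rw [tmul_smul, ← algebraMap_smul B (s : A), map_smul, smul_eq_mul]
    rw [e1, hsb]
    have e2 : (1 : B) ⊗ₜ[A] (algebraMap A B a) = a • ((1 : B) ⊗ₜ[A] (1 : B)) := by
      rw [← tmul_smul, Algebra.smul_def, mul_one]
    rw [e2, ← algebraMap_smul B a, map_smul, smul_eq_mul, ← hsb,
      Algebra.smul_def, mul_assoc]
  -- cancel `algebraMap A B s` after passing to `K`, where it is a unit
  have hu : IsUnit (algebraMap A K (s : A)) :=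
    IsLocalization.map_units K s
  have h2 : (algebraMap A K (s : A)) * (ψ ((1 : B) ⊗ₜ[A] b) : K)
      = (algebraMap A K (s : A)) * ((b * ψ ((1 : B) ⊗ₜ[A] (1 : B)) : B) : K) := by
    have := congrArg (Subtype.val) h1
    simpa [Algebra.smul_def] using this
  ext
  exact hu.mul_left_cancel h2
end

section
/- The Lebesgue integral over the punctured disc {z ∈ ℂ : 0 < |z| < 1/2} of ε² / ((|z|² + ε²) · |z|² · (log|z|²)²) tends to 0 as ε → 0⁺. -/
/-!
The integrand is dominated by `1 / (|z|² (log |z|²)²)`, since `ε² / (|z|² + ε²) ≤ 1`, and tends to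
`0` pointwise, so dominated convergence applies once the dominating function is integrable. In
polar coordinates its integral over the disc of radius `r < 1` becomes, up to a constant,
`∫₀ʳ dρ / (ρ (log ρ)²)`, which is finite because `-1 / log ρ` is a bounded primitive.
-/

open MeasureTheory Filter

namespace Real

theorem continuousAt_inv_log_zero : ContinuousAt (fun x : ℝ => (log x)⁻¹) 0 := by
  rw [← continuousWithinAt_compl_self, ContinuousWithinAt, log_zero, inv_zero]
  exact tendsto_inv_atBot_zero.comp tendsto_log_nhdsNE_zero

theorem integrableOn_inv_div_log_sq {a : ℝ} (ha : a < 1) :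
    IntegrableOn (fun x : ℝ => x⁻¹ / log x ^ 2) (Set.Ioc 0 a) := by
  refine intervalIntegral.integrableOn_deriv_of_nonneg (g := fun x => -(log x)⁻¹) ?_ ?_ ?_
  · rintro x ⟨hx0, hxa⟩
    rcases hx0.eq_or_lt with rfl | hx0
    · exact continuousAt_inv_log_zero.neg.continuousWithinAt
    · have hlog : log x ≠ 0 := (log_neg hx0 (hxa.trans_lt ha)).ne
      exact ((continuousAt_log hx0.ne').inv₀ hlog).neg.continuousWithinAt
  · intro x hx
    exact (hasDerivAt_inv_log hx.1.ne' (hx.2.trans ha).ne (by linarith [hx.1])).neg.congr_deriv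
      (by ring)
  · intro x hx
    exact div_nonneg (inv_nonneg.2 hx.1.le) (sq_nonneg _)

end Real

theorem integrableOn_ball_inv_sq_norm_mul_log_sq {E : Type*} [NormedAddCommGroup E]
    [NormedSpace ℝ E] [MeasurableSpace E] [BorelSpace E] [FiniteDimensional ℝ E]
    (μ : Measure E) [μ.IsAddHaarMeasure] (hE : Module.finrank ℝ E = 2) {r : ℝ} (hr : r < 1) :
    IntegrableOn (fun x : E => (‖x‖ ^ 2 * Real.log (‖x‖ ^ 2) ^ 2)⁻¹) (Metric.ball 0 r) μ := by
  have : Nontrivial E := Module.nontrivial_of_finrank_eq_succ hE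
  rw [integrableOn_fun_norm_addHaar μ (f := fun y => (y ^ 2 * Real.log (y ^ 2) ^ 2)⁻¹), hE]
  refine IntegrableOn.congr_fun (((Real.integrableOn_inv_div_log_sq hr).mono_set
    Set.Ioo_subset_Ioc_self).const_mul (4 : ℝ)⁻¹) (fun y hy => ?_) measurableSet_Ioo
  have hy0 : y ≠ 0 := hy.1.ne'
  simp only [Real.log_pow, smul_eq_mul, Nat.add_one_sub_one, pow_one, Nat.cast_ofNat]
  field_simp
  ring

theorem sq_div_add_sq_mul_mul_le_inv {a b : ℝ} (ha : 0 ≤ a) (hb : 0 ≤ b) (ε : ℝ) :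
    ε ^ 2 / ((a + ε ^ 2) * a * b) ≤ (a * b)⁻¹ := by
  rw [mul_assoc, ← div_div, div_eq_mul_inv]
  exact mul_le_of_le_one_left (by positivity) (div_le_one_of_le₀ (by linarith) (by positivity))

theorem tendsto_sq_div_add_sq_mul_mul (a b : ℝ) :
    Tendsto (fun ε : ℝ => ε ^ 2 / ((a + ε ^ 2) * a * b)) (nhds 0) (nhds 0) := by
  by_cases hab : a * b = 0
  · simp [mul_assoc, hab]
  · have hden : Tendsto (fun ε : ℝ => (a + ε ^ 2) * a * b) (nhds 0) (nhds (a * a * b)) :=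
      (by fun_prop : Continuous fun ε : ℝ => (a + ε ^ 2) * a * b).tendsto' 0 _ (by simp)
    have hnum : Tendsto (fun ε : ℝ => ε ^ 2) (nhds 0) (nhds 0) :=
      (continuous_pow 2).tendsto' 0 0 (by simp)
    simpa only [zero_div, Pi.div_def] using hnum.div hden (by simpa [mul_assoc] using hab)

/-- The Lebesgue integral over the punctured disc `{z ∈ ℂ : 0 < |z| < 1/2}` of
`ε² / ((|z|²+ε²) |z|² (log |z|²)²)` tends to `0` as `ε → 0⁺`. -/
theorem tendsto_integral_cusp :
    Tendsto (fun ε : ℝ =>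
        ∫ z in {z : ℂ | 0 < ‖z‖ ∧ ‖z‖ < 1 / 2},
          ε ^ 2 / ((‖z‖ ^ 2 + ε ^ 2) * ‖z‖ ^ 2 *
            (Real.log (‖z‖ ^ 2)) ^ 2))
      (nhdsWithin 0 (Set.Ioi 0)) (nhds 0) := by
  have hbound : IntegrableOn (fun z : ℂ => (‖z‖ ^ 2 * Real.log (‖z‖ ^ 2) ^ 2)⁻¹)
      {z : ℂ | 0 < ‖z‖ ∧ ‖z‖ < 1 / 2} :=
    (integrableOn_ball_inv_sq_norm_mul_log_sq volume Complex.finrank_real_complex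
      (by norm_num)).mono_set fun z hz => mem_ball_zero_iff.2 hz.2
  have hle (ε : ℝ) (z : ℂ) :
      ‖ε ^ 2 / ((‖z‖ ^ 2 + ε ^ 2) * ‖z‖ ^ 2 * Real.log (‖z‖ ^ 2) ^ 2)‖ ≤
        (‖z‖ ^ 2 * Real.log (‖z‖ ^ 2) ^ 2)⁻¹ := by
    rw [Real.norm_of_nonneg (by positivity)]
    exact sq_div_add_sq_mul_mul_le_inv (by positivity) (by positivity) ε
  simpa only [integral_zero] using tendsto_integral_filter_of_dominated_convergence _
    (.of_forall fun ε => Measurable.aestronglyMeasurable (by fun_prop))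
    (.of_forall fun ε => ae_of_all _ (hle ε)) hbound
    (ae_of_all _ fun z =>
      (tendsto_sq_div_add_sq_mul_mul (‖z‖ ^ 2) (Real.log (‖z‖ ^ 2) ^ 2)).mono_left
        (nhdsWithin_le_nhds (s := Set.Ioi 0)))
end
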